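/- arXiv:1609.07017 — 3 statements merged into one kernel-verified Lean document; each statement's English description precedes it below -/
import Mathlib

section
/- Let x_1,…,x_d be elements of a commutative ring R and let 0 → L → M → N → 0 be a short exact sequence of finitely generated R-modules. Then 𝔥^d_x(M) ≤ 𝔥^d_x(L) + 𝔥^d_x(N) in [0,∞]. -/
open scoped BigOperators ENNReal

universe u v

/-- A filtration of `M` of length `h` whose factors are cyclic modules killed by `J`. -/
def HasQLFiltration (S : Type u) [CommRing S] (J : Ideal S)
    (M : Type v) [AddCommGroup M] [Module S M] (h : ℕ) : Prop :=
  ∃ c : Fin (h + 1) → Submodule S M,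
    Monotone c ∧ c 0 = ⊥ ∧ c (Fin.last h) = ⊤ ∧
    ∀ i : Fin h,
      (∃ m : M, c i.succ = c i.castSucc ⊔ Submodule.span S {m}) ∧
      ∀ a ∈ J, ∀ x ∈ c i.succ, a • x ∈ c i.castSucc

/-- The `J`-quasilength of `M`. -/
noncomputable def quasilength (S : Type u) [CommRing S] (J : Ideal S)
    (M : Type v) [AddCommGroup M] [Module S M] : ℕ∞ :=
  sInf {n : ℕ∞ | ∃ h : ℕ, n = (h : ℕ∞) ∧ HasQLFiltration S J M h}

/-- The ideal `(x₁^{t₁}, …, x_d^{t_d})`. -/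
def powerIdeal {R : Type u} [CommRing R] {d : ℕ} (x : Fin d → R) (t : Fin d → ℕ) : Ideal R :=
  Ideal.span (Set.range fun i => x i ^ t i)

/-- The content `𝔥^d_x(M)` of `M` with respect to `x₁, …, x_d`. -/
noncomputable def content {R : Type u} [CommRing R] {d : ℕ} (x : Fin d → R)
    (M : Type v) [AddCommGroup M] [Module R M] : ℝ≥0∞ :=
  ⨆ s : ℕ, ⨅ t : {t : Fin d → ℕ // ∀ i, s ≤ t i ∧ 0 < t i},
    (quasilength R (Ideal.span (Set.range x))
        (M ⧸ (powerIdeal x (t : Fin d → ℕ) • (⊤ : Submodule R M))) : ℝ≥0∞) /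
      ∏ i, ((t : Fin d → ℕ) i : ℝ≥0∞)

/-!
Quasilength is subadditive along exact sequences `A → B → C → 0`: a filtration of `A` pushed
forward and one of `C` pulled back concatenate to a filtration of `B`. As `M ⧸ 𝔞M ≅ (R ⧸ 𝔞) ⊗ M`
is right exact in `M`, this gives `𝓛(M/I_t M) ≤ 𝓛(L/I_t L) + 𝓛(N/I_t N)` for every `t`.
Tensoring `R/(𝔞, s) →(r·) R/(𝔞, rs) → R/(𝔞, r) → 0` with `M` instead gives
`𝓛(M/I_{t·u} M) ≤ (u₁⋯u_d) 𝓛(M/I_t M)`, so the normalized quasilengths can only drop when `t`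
is multiplied by `u`. Evaluating at `t₁ * t₂` therefore bounds the infimum for `M` by the value
for `L` at `t₁` plus the value for `N` at `t₂`.
-/

section Quasilength

open Function

variable {S : Type*} [CommRing S] {J : Ideal S}
  {A B C : Type*} [AddCommGroup A] [Module S A] [AddCommGroup B] [Module S B]
  [AddCommGroup C] [Module S C]

def IsQLStep (J : Ideal S) (P Q : Submodule S B) : Prop :=
  (∃ m : B, Q = P ⊔ Submodule.span S {m}) ∧ ∀ a ∈ J, ∀ y ∈ Q, a • y ∈ P

theorem IsQLStep.le {P Q : Submodule S B} (h : IsQLStep J P Q) : P ≤ Q := by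
  obtain ⟨⟨m, rfl⟩, -⟩ := h
  exact le_sup_left

theorem IsQLStep.map (f : A →ₗ[S] B) {P Q : Submodule S A} (h : IsQLStep J P Q) :
    IsQLStep J (P.map f) (Q.map f) := by
  obtain ⟨⟨m, rfl⟩, hJ⟩ := h
  refine ⟨⟨f m, by rw [Submodule.map_sup, Submodule.map_span, Set.image_singleton]⟩, ?_⟩
  rintro a ha _ ⟨y, hy, rfl⟩
  rw [← map_smul]
  exact Submodule.mem_map_of_mem (hJ a ha y hy)

theorem IsQLStep.comap (g : B →ₗ[S] C) (hg : Surjective g) {P Q : Submodule S C}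
    (h : IsQLStep J P Q) : IsQLStep J (P.comap g) (Q.comap g) := by
  obtain ⟨⟨m, rfl⟩, hJ⟩ := h
  obtain ⟨m, rfl⟩ := hg m
  refine ⟨⟨m, ?_⟩, fun a ha y hy => by simpa using hJ a ha _ hy⟩
  have hker : LinearMap.ker g ≤ P.comap g ⊔ Submodule.span S {m} :=
    le_sup_of_le_left (Submodule.comap_mono bot_le)
  rw [← Submodule.comap_map_eq_self hker, Submodule.map_sup,
    Submodule.map_comap_eq_of_surjective hg, Submodule.map_span, Set.image_singleton]

theorem hasQLFiltration_iff {h : ℕ} : HasQLFiltration S J B h ↔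
    ∃ c : ℕ → Submodule S B, c 0 = ⊥ ∧ c h = ⊤ ∧ ∀ i < h, IsQLStep J (c i) (c (i + 1)) := by
  constructor
  · rintro ⟨c, -, c0, ch, hc⟩
    refine ⟨fun n => c ⟨min n h, by omega⟩, by simpa using c0, by simpa [Fin.last] using ch,
      fun i hi => ?_⟩
    have hci : IsQLStep J (c (Fin.castSucc ⟨i, hi⟩)) (c (Fin.succ ⟨i, hi⟩)) := hc ⟨i, hi⟩
    convert hci using 2 <;> ext <;> simp <;> omega
  · rintro ⟨c, c0, ch, hc⟩
    have hstep (i : Fin h) : IsQLStep J (c i.castSucc) (c i.succ) := hc i i.isLt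
    exact ⟨fun i => c i, Fin.monotone_iff_le_succ.2 fun i => (hstep i).le, c0, ch, hstep⟩

theorem HasQLFiltration.of_surjective (g : B →ₗ[S] C) (hg : Surjective g) {h : ℕ}
    (hB : HasQLFiltration S J B h) : HasQLFiltration S J C h := by
  obtain ⟨c, c0, ch, hc⟩ := hasQLFiltration_iff.1 hB
  refine hasQLFiltration_iff.2 ⟨fun i => (c i).map g, ?_, ?_, fun i hi => (hc i hi).map g⟩
  · simp only [c0, Submodule.map_bot]
  · simp only [ch, Submodule.map_top, LinearMap.range_eq_top.2 hg]

theorem HasQLFiltration.of_exact (f : A →ₗ[S] B) (g : B →ₗ[S] C) (hg : Surjective g)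
    (hfg : Exact f g) {a b : ℕ} (hA : HasQLFiltration S J A a) (hC : HasQLFiltration S J C b) :
    HasQLFiltration S J B (a + b) := by
  obtain ⟨c, c0, ca, hc⟩ := hasQLFiltration_iff.1 hA
  obtain ⟨e, e0, eb, he⟩ := hasQLFiltration_iff.1 hC
  let D : ℕ → Submodule S B := fun n => if n ≤ a then (c n).map f else (e (n - a)).comap g
  have hDc (n : ℕ) (hn : n ≤ a) : D n = (c n).map f := if_pos hn
  have hDe (n : ℕ) (hn : a ≤ n) : D n = (e (n - a)).comap g := by
    rcases hn.eq_or_lt with rfl | hn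
    · rw [hDc _ le_rfl, Nat.sub_self, ca, e0, Submodule.map_top, Submodule.comap_bot,
        hfg.linearMap_ker_eq]
    · exact if_neg hn.not_ge
  refine hasQLFiltration_iff.2 ⟨D, ?_, ?_, fun i hi => ?_⟩
  · rw [hDc 0 (Nat.zero_le a), c0, Submodule.map_bot]
  · rw [hDe _ (Nat.le_add_right a b), Nat.add_sub_cancel_left, eb, Submodule.comap_top]
  · by_cases hia : i + 1 ≤ a
    · rw [hDc i (by omega), hDc (i + 1) hia]
      exact (hc i (by omega)).map f
    · rw [hDe i (by omega), hDe (i + 1) (by omega), show i + 1 - a = i - a + 1 by omega]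
      exact (he (i - a) (by omega)).comap g hg

theorem quasilength_le {h : ℕ} (hB : HasQLFiltration S J B h) : quasilength S J B ≤ h :=
  sInf_le ⟨h, rfl, hB⟩

theorem exists_hasQLFiltration_of_ne_top (hB : quasilength S J B ≠ ⊤) :
    ∃ h : ℕ, quasilength S J B = h ∧ HasQLFiltration S J B h := by
  have hne : {n : ℕ∞ | ∃ h : ℕ, n = h ∧ HasQLFiltration S J B h}.Nonempty :=
    Set.nonempty_iff_ne_empty.2 fun hemp => hB (by rw [quasilength, hemp, sInf_empty])
  obtain ⟨h, hh, hF⟩ := csInf_mem hne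
  exact ⟨h, hh, hF⟩

theorem quasilength_le_of_surjective (g : B →ₗ[S] C) (hg : Surjective g) :
    quasilength S J C ≤ quasilength S J B :=
  sInf_le_sInf fun _ ⟨h, hn, hB⟩ => ⟨h, hn, hB.of_surjective g hg⟩

theorem quasilength_congr (e : B ≃ₗ[S] C) : quasilength S J B = quasilength S J C :=
  le_antisymm (quasilength_le_of_surjective e.symm.toLinearMap e.symm.surjective)
    (quasilength_le_of_surjective e.toLinearMap e.surjective)

theorem quasilength_eq_zero_of_subsingleton [Subsingleton B] : quasilength S J B = 0 :=
  nonpos_iff_eq_zero.1 <| quasilength_le <| hasQLFiltration_iff.2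
    ⟨fun _ => ⊥, rfl, Subsingleton.elim _ _, fun i hi => absurd hi (Nat.not_lt_zero i)⟩

theorem quasilength_le_add_of_exact (f : A →ₗ[S] B) (g : B →ₗ[S] C) (hg : Surjective g)
    (hfg : Exact f g) : quasilength S J B ≤ quasilength S J A + quasilength S J C := by
  rcases eq_or_ne (quasilength S J A) ⊤ with hA | hA
  · simp [hA]
  rcases eq_or_ne (quasilength S J C) ⊤ with hC | hC
  · simp [hC]
  obtain ⟨a, ha, hFA⟩ := exists_hasQLFiltration_of_ne_top hA
  obtain ⟨c, hc, hFC⟩ := exists_hasQLFiltration_of_ne_top hC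
  rw [ha, hc]
  exact_mod_cast quasilength_le (hFA.of_exact f g hg hfg hFC)

end Quasilength

section Content

open Function TensorProduct

variable {R : Type*} [CommRing R] {J : Ideal R}
  {A B C : Type*} [AddCommGroup A] [Module R A] [AddCommGroup B] [Module R B]
  [AddCommGroup C] [Module R C]

theorem quasilength_quotient_smul_top_eq_tensor (𝔞 : Ideal R) :
    quasilength R J (B ⧸ 𝔞 • (⊤ : Submodule R B)) = quasilength R J ((R ⧸ 𝔞) ⊗[R] B) :=
  (quasilength_congr (quotTensorEquivQuotSMul B 𝔞)).symm

theorem quasilength_quotient_smul_le_add_of_exact (𝔞 : Ideal R) (f : A →ₗ[R] B) (g : B →ₗ[R] C)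
    (hg : Surjective g) (hfg : Exact f g) :
    quasilength R J (B ⧸ 𝔞 • (⊤ : Submodule R B)) ≤
      quasilength R J (A ⧸ 𝔞 • (⊤ : Submodule R A)) +
        quasilength R J (C ⧸ 𝔞 • (⊤ : Submodule R C)) := by
  simp only [quasilength_quotient_smul_top_eq_tensor]
  exact quasilength_le_add_of_exact _ _ (g.lTensor_surjective _ hg) (lTensor_exact _ hfg hg)

theorem exact_mapQ_mulLeft_factor {𝔭 𝔮 : Ideal R} {r : R} (h : Ideal.span {r} * 𝔮 ≤ 𝔭) :
    Exact (𝔮.mapQ 𝔭 (LinearMap.mulLeft R r)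
        fun _ ha => h (Ideal.mul_mem_mul (Ideal.mem_span_singleton_self r) ha))
      (Submodule.factor (le_sup_left : 𝔭 ≤ 𝔭 ⊔ Ideal.span {r})) := by
  have hr : LinearMap.range (LinearMap.mulLeft R r) = Ideal.span {r} := by
    ext a
    simp [Ideal.mem_span_singleton', mul_comm]
  rw [LinearMap.exact_iff, Submodule.range_mapQ, Submodule.ker_mapQ, Submodule.comap_id,
    Submodule.map_sup, Submodule.mkQ_map_self, bot_sup_eq, hr]

theorem quasilength_quotient_le_add_of_span_mul_le {𝔭 𝔮 : Ideal R} {r : R}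
    (h : Ideal.span {r} * 𝔮 ≤ 𝔭) :
    quasilength R J (B ⧸ 𝔭 • (⊤ : Submodule R B)) ≤
      quasilength R J (B ⧸ 𝔮 • (⊤ : Submodule R B)) +
        quasilength R J (B ⧸ (𝔭 ⊔ Ideal.span {r}) • (⊤ : Submodule R B)) := by
  simp only [quasilength_quotient_smul_top_eq_tensor]
  have hπ := Submodule.factor_surjective (le_sup_left : 𝔭 ≤ 𝔭 ⊔ Ideal.span {r})
  exact quasilength_le_add_of_exact _ _ (LinearMap.rTensor_surjective B hπ)
    (rTensor_exact B (exact_mapQ_mulLeft_factor h) hπ)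

theorem quasilength_quotient_sup_span_pow_le (𝔞 : Ideal R) (r : R) (n : ℕ) :
    quasilength R J (B ⧸ (𝔞 ⊔ Ideal.span {r ^ n}) • (⊤ : Submodule R B)) ≤
      n * quasilength R J (B ⧸ (𝔞 ⊔ Ideal.span {r}) • (⊤ : Submodule R B)) := by
  induction n with
  | zero =>
    rw [pow_zero, Ideal.span_singleton_one, sup_top_eq, Submodule.top_smul,
      quasilength_eq_zero_of_subsingleton]
    exact zero_le
  | succ n ih =>
    have hmul : Ideal.span {r} * (𝔞 ⊔ Ideal.span {r ^ n}) ≤ 𝔞 ⊔ Ideal.span {r ^ (n + 1)} := by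
      rw [Ideal.mul_sup, Ideal.span_singleton_mul_span_singleton, ← pow_succ']
      exact sup_le_sup_right Ideal.mul_le_right _
    have hsup : 𝔞 ⊔ Ideal.span {r ^ (n + 1)} ⊔ Ideal.span {r} = 𝔞 ⊔ Ideal.span {r} := by
      rw [sup_assoc, sup_eq_right.2
        (Ideal.span_singleton_le_span_singleton.2 (dvd_pow_self r n.succ_ne_zero))]
    calc _ ≤ _ + _ := quasilength_quotient_le_add_of_span_mul_le (B := B) hmul
      _ ≤ _ := by rw [hsup, Nat.cast_succ, add_one_mul]; exact add_le_add ih le_rfl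

theorem quasilength_quotient_sup_span_image_pow_le {ι : Type*} (y : ι → R) (u : ι → ℕ)
    (s : Finset ι) (𝔞 : Ideal R) :
    quasilength R J (B ⧸ (𝔞 ⊔ Ideal.span ((fun i => y i ^ u i) '' s)) • (⊤ : Submodule R B)) ≤
      (∏ i ∈ s, u i : ℕ) *
        quasilength R J (B ⧸ (𝔞 ⊔ Ideal.span (y '' s)) • (⊤ : Submodule R B)) := by
  classical
  induction s using Finset.induction_on generalizing 𝔞 with
  | empty =>
    rw [Finset.coe_empty, Set.image_empty, Set.image_empty, Finset.prod_empty, Nat.cast_one,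
      one_mul]
  | insert j s hj ih =>
    rw [Finset.coe_insert, Set.image_insert_eq, Set.image_insert_eq, Ideal.span_insert,
      Ideal.span_insert, Finset.prod_insert hj, Nat.cast_mul, ← sup_assoc, ← sup_assoc]
    refine (ih _).trans ?_
    rw [sup_right_comm, sup_right_comm 𝔞 (Ideal.span {y j}), mul_comm (u j : ℕ∞), mul_assoc]
    exact mul_le_mul_right (quasilength_quotient_sup_span_pow_le (B := B) _ (y j) (u j)) _

theorem quasilength_quotient_powerIdeal_mul_le {d : ℕ} (x : Fin d → R) (t u : Fin d → ℕ) :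
    quasilength R J (B ⧸ powerIdeal x (t * u) • (⊤ : Submodule R B)) ≤
      (∏ i, u i : ℕ) * quasilength R J (B ⧸ powerIdeal x t • (⊤ : Submodule R B)) := by
  have h := quasilength_quotient_sup_span_image_pow_le (J := J) (B := B) (fun i => x i ^ t i) u
    Finset.univ ⊥
  have hpow : powerIdeal x (t * u) = Ideal.span (Set.range fun i => (x i ^ t i) ^ u i) := by
    simp only [powerIdeal, Pi.mul_apply, pow_mul]
  rwa [Finset.coe_univ, Set.image_univ, Set.image_univ, bot_sup_eq, bot_sup_eq, ← hpow] at h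

/-- The ratio `𝓛_I(M/I_t M)/(t₁⋯t_d)` whose limit inferior over `t` is `content x M`. -/
noncomputable def quasilengthRatio {d : ℕ} (x : Fin d → R) (M : Type*) [AddCommGroup M]
    [Module R M] (t : Fin d → ℕ) : ℝ≥0∞ :=
  (quasilength R (Ideal.span (Set.range x)) (M ⧸ powerIdeal x t • (⊤ : Submodule R M)) : ℝ≥0∞) /
    ∏ i, (t i : ℝ≥0∞)

theorem quasilengthRatio_le_add {d : ℕ} (x : Fin d → R) (f : A →ₗ[R] B) (g : B →ₗ[R] C)
    (hg : Surjective g) (hfg : Exact f g) (t : Fin d → ℕ) :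
    quasilengthRatio x B t ≤ quasilengthRatio x A t + quasilengthRatio x C t := by
  rw [quasilengthRatio, quasilengthRatio, quasilengthRatio, ← ENNReal.add_div,
    ← ENat.toENNReal_add]
  exact ENNReal.div_le_div_right
    (ENat.toENNReal_le.2 (quasilength_quotient_smul_le_add_of_exact _ f g hg hfg)) _

theorem quasilengthRatio_mul_le {d : ℕ} (x : Fin d → R) (t u : Fin d → ℕ) (hu : ∀ i, 0 < u i) :
    quasilengthRatio x B (t * u) ≤ quasilengthRatio x B t := by
  have hprod : ∏ i, ((t * u) i : ℝ≥0∞) = (∏ i, (u i : ℝ≥0∞)) * ∏ i, (t i : ℝ≥0∞) := by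
    rw [← Finset.prod_mul_distrib]
    simp [mul_comm]
  have hu₀ : ∏ i, (u i : ℝ≥0∞) ≠ 0 :=
    Finset.prod_ne_zero_iff.2 fun i _ => by exact_mod_cast (hu i).ne'
  have hu_top : ∏ i, (u i : ℝ≥0∞) ≠ ⊤ := ENNReal.prod_ne_top fun i _ => ENNReal.natCast_ne_top _
  have hql := ENat.toENNReal_le.2 (quasilength_quotient_powerIdeal_mul_le (B := B)
    (J := Ideal.span (Set.range x)) x t u)
  rw [ENat.toENNReal_mul, ENat.toENNReal_coe, Nat.cast_prod] at hql
  rw [quasilengthRatio, quasilengthRatio, hprod]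
  exact (ENNReal.div_le_div_right hql _).trans_eq (ENNReal.mul_div_mul_left _ _ hu₀ hu_top)

end Content

theorem iSup_iInf_le_add_of_le_add {ι : Type*} {a b c : (ι → ℕ) → ℝ≥0∞}
    (hb : ∀ t, b t ≤ a t + c t) (ha : ∀ t u, (∀ i, 0 < u i) → a (t * u) ≤ a t)
    (hc : ∀ t u, (∀ i, 0 < u i) → c (t * u) ≤ c t) :
    ⨆ s : ℕ, ⨅ t : {t : ι → ℕ // ∀ i, s ≤ t i ∧ 0 < t i}, b t ≤
      (⨆ s : ℕ, ⨅ t : {t : ι → ℕ // ∀ i, s ≤ t i ∧ 0 < t i}, a t) +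
        ⨆ s : ℕ, ⨅ t : {t : ι → ℕ // ∀ i, s ≤ t i ∧ 0 < t i}, c t := by
  refine iSup_le fun s => le_trans (ENNReal.le_iInf_add_iInf fun t₁ t₂ => ?_)
    (add_le_add (le_iSup_of_le s le_rfl) (le_iSup_of_le s le_rfl))
  have ht : ∀ i, s ≤ (t₁.1 * t₂.1) i ∧ 0 < (t₁.1 * t₂.1) i := fun i =>
    ⟨(t₁.2 i).1.trans (Nat.le_mul_of_pos_right _ (t₂.2 i).2), Nat.mul_pos (t₁.2 i).2 (t₂.2 i).2⟩
  calc ⨅ t : {t : ι → ℕ // ∀ i, s ≤ t i ∧ 0 < t i}, b t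
      ≤ b (t₁.1 * t₂.1) := iInf_le_of_le ⟨_, ht⟩ le_rfl
    _ ≤ a (t₁.1 * t₂.1) + c (t₂.1 * t₁.1) := mul_comm t₁.1 t₂.1 ▸ hb _
    _ ≤ a t₁ + c t₂ := add_le_add (ha _ _ fun i => (t₂.2 i).2) (hc _ _ fun i => (t₁.2 i).2)

theorem content_le_add_of_shortExact_general
    {R : Type u} [CommRing R] {d : ℕ} (x : Fin d → R)
    (L M N : Type v) [AddCommGroup L] [Module R L] [AddCommGroup M] [Module R M]
    [AddCommGroup N] [Module R N]
    (f : L →ₗ[R] M) (g : M →ₗ[R] N)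
    (hg : Function.Surjective g)
    (hfg : Function.Exact f g) :
    content x M ≤ content x L + content x N :=
  iSup_iInf_le_add_of_le_add (quasilengthRatio_le_add x f g hg hfg)
    (quasilengthRatio_mul_le x) (quasilengthRatio_mul_le x)

/-- If `0 → L → M → N → 0` is a short exact sequence of finitely
generated modules over a commutative ring `R` and `x₁, …, x_d ∈ R`, then
`𝔥^d_x(M) ≤ 𝔥^d_x(L) + 𝔥^d_x(N)`. -/
theorem content_le_add_of_shortExact
    {R : Type u} [CommRing R] {d : ℕ} (x : Fin d → R)
    (L M N : Type v) [AddCommGroup L] [Module R L] [AddCommGroup M] [Module R M]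
    [AddCommGroup N] [Module R N]
    [Module.Finite R L] [Module.Finite R M] [Module.Finite R N]
    (f : L →ₗ[R] M) (g : M →ₗ[R] N)
    (hf : Function.Injective f) (hg : Function.Surjective g)
    (hfg : Function.Exact f g) :
    content x M ≤ content x L + content x N :=
  content_le_add_of_shortExact_general x L M N f g hg hfg
end

section
/- Let A be a Noetherian commutative ring, let R = A[x,y,u,v] be the polynomial ring in four variables, and set x₁ = xu, x₂ = yv, x₃ = xv + yu, I = (x₁,x₂,x₃)R. For t ≥ 1 let I_t = (x₁^t, x₂^t, x₃^t)R and I'_t = (x₁^t, x₂^t, x^t v^t + y^t u^t)R. Then: (1) (xv)² ∈ I and (yu)² ∈ I; (2) I_{4t} ⊆ I'_t for all t ≥ 1; (3) I'_{12t} ⊆ I_t for all t ≥ 1. -/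
open MvPolynomial

universe u

lemma pow_add_mem_ideal {R : Type*} [CommRing R] {K : Ideal R} {p q : R} {m n : ℕ}
    (hp : p ^ m ∈ K) (hq : q ^ n ∈ K) : (p + q) ^ (m + n) ∈ K := by
  rw [add_pow]
  refine Ideal.sum_mem _ fun k hk => ?_
  rcases le_or_gt m k with h | h
  · have hpk : p ^ k = p ^ m * p ^ (k - m) := by
      rw [← pow_add, Nat.add_sub_cancel' h]
    rw [hpk, mul_assoc, mul_assoc]
    exact Ideal.mul_mem_right _ _ hp
  · have hqk : q ^ (m + n - k) = q ^ n * q ^ (m + n - k - n) := by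
      rw [← pow_add]; congr 1; omega
    rw [hqk]
    refine Ideal.mul_mem_right _ _ ?_
    rw [show p ^ k * (q ^ n * q ^ (m + n - k - n)) =
        p ^ k * q ^ (m + n - k - n) * q ^ n by ring]
    exact Ideal.mul_mem_left _ _ hq

/-- In `R = A[x,y,u,v]` with `x₁ = xu`, `x₂ = yv`, `x₃ = xv + yu`,
`I = (x₁,x₂,x₃)`, `I_t = (x₁^t, x₂^t, x₃^t)` and `I'_t = (x₁^t, x₂^t, x^t v^t + y^t u^t)`:
(1) `(xv)², (yu)² ∈ I`; (2) `I_{4t} ⊆ I'_t`; (3) `I'_{12t} ⊆ I_t`. -/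
theorem ideal_comparison
    (A : Type u) [CommRing A] [IsNoetherianRing A] :
    let x : MvPolynomial (Fin 4) A := X 0
    let y : MvPolynomial (Fin 4) A := X 1
    let u : MvPolynomial (Fin 4) A := X 2
    let v : MvPolynomial (Fin 4) A := X 3
    let I : Ideal (MvPolynomial (Fin 4) A) := Ideal.span {x * u, y * v, x * v + y * u}
    let It : ℕ → Ideal (MvPolynomial (Fin 4) A) := fun t =>
      Ideal.span {(x * u) ^ t, (y * v) ^ t, (x * v + y * u) ^ t}
    let I't : ℕ → Ideal (MvPolynomial (Fin 4) A) := fun t =>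
      Ideal.span {(x * u) ^ t, (y * v) ^ t, x ^ t * v ^ t + y ^ t * u ^ t}
    ((x * v) ^ 2 ∈ I ∧ (y * u) ^ 2 ∈ I) ∧
    (∀ t : ℕ, 1 ≤ t → It (4 * t) ≤ I't t) ∧
    (∀ t : ℕ, 1 ≤ t → I't (12 * t) ≤ It t) := by
  intro x y u v I It I't
  -- generators of I
  have hg1 : x * u ∈ I := Ideal.subset_span (by simp)
  have hg2 : y * v ∈ I := Ideal.subset_span (by simp)
  have hg3 : x * v + y * u ∈ I := Ideal.subset_span (by simp)
  refine ⟨⟨?_, ?_⟩, ?_, ?_⟩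
  · -- (x*v)^2 ∈ I
    have hid : (x * v) ^ 2 = (x * v) * (x * v + y * u) - (y * v) * (x * u) := by ring
    rw [hid]
    exact sub_mem (Ideal.mul_mem_left _ _ hg3) (Ideal.mul_mem_left _ _ hg1)
  · -- (y*u)^2 ∈ I
    have hid : (y * u) ^ 2 = (y * u) * (x * v + y * u) - (x * u) * (y * v) := by ring
    rw [hid]
    exact sub_mem (Ideal.mul_mem_left _ _ hg3) (Ideal.mul_mem_left _ _ hg2)
  · -- I_{4t} ⊆ I'_t
    intro t _
    have hg1' : (x * u) ^ t ∈ I't t := Ideal.subset_span (by simp)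
    have hg2' : (y * v) ^ t ∈ I't t := Ideal.subset_span (by simp)
    have hg3' : x ^ t * v ^ t + y ^ t * u ^ t ∈ I't t := Ideal.subset_span (by simp)
    show Ideal.span _ ≤ _
    rw [Ideal.span_le]
    rintro p hp
    simp only [Set.mem_insert_iff, Set.mem_singleton_iff] at hp
    rcases hp with rfl | rfl | rfl
    · rw [show (x * u) ^ (4 * t) = (x * u) ^ (3 * t) * (x * u) ^ t by
        rw [← pow_add]; ring_nf]
      exact Ideal.mul_mem_left _ _ hg1'
    · rw [show (y * v) ^ (4 * t) = (y * v) ^ (3 * t) * (y * v) ^ t by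
        rw [← pow_add]; ring_nf]
      exact Ideal.mul_mem_left _ _ hg2'
    · -- (x*v + y*u)^(4t) ∈ I'_t
      have hxv : (x * v) ^ (2 * t) ∈ I't t := by
        have hid : (x * v) ^ (2 * t) =
            (x * v) ^ t * (x ^ t * v ^ t + y ^ t * u ^ t) - y ^ t * v ^ t * (x * u) ^ t := by
          ring
        rw [hid]
        exact sub_mem (Ideal.mul_mem_left _ _ hg3') (Ideal.mul_mem_left _ _ hg1')
      have hyu : (y * u) ^ (2 * t) ∈ I't t := by
        have hid : (y * u) ^ (2 * t) =
            (y * u) ^ t * (x ^ t * v ^ t + y ^ t * u ^ t) - x ^ t * u ^ t * (y * v) ^ t := by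
          ring
        rw [hid]
        exact sub_mem (Ideal.mul_mem_left _ _ hg3') (Ideal.mul_mem_left _ _ hg2')
      rw [show 4 * t = 2 * t + 2 * t by ring]
      exact pow_add_mem_ideal hxv hyu
  · -- I'_{12t} ⊆ I_t
    intro t _
    have hg1' : (x * u) ^ t ∈ It t := Ideal.subset_span (by simp)
    have hg2' : (y * v) ^ t ∈ It t := Ideal.subset_span (by simp)
    have hg3' : (x * v + y * u) ^ t ∈ It t := Ideal.subset_span (by simp)
    have hab : (x * u) ^ t * (y * v) ^ t ∈ It t := Ideal.mul_mem_right _ _ hg1'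
    -- (x*v)^(4t) ∈ I_t
    have hxv : (x * v) ^ (4 * t) ∈ It t := by
      have hp : ((x * v) * (x * v + y * u)) ^ t ∈ It t := by
        rw [show ((x * v) * (x * v + y * u)) ^ t =
            (x * v) ^ t * (x * v + y * u) ^ t by rw [mul_pow]]
        exact Ideal.mul_mem_left _ _ hg3'
      have hq : (-((x * u) * (y * v))) ^ t ∈ It t := by
        rw [show (-((x * u) * (y * v))) ^ t =
            (-1) ^ t * ((x * u) ^ t * (y * v) ^ t) by rw [← mul_pow, neg_pow]]
        exact Ideal.mul_mem_left _ _ hab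
      have := pow_add_mem_ideal (K := It t) hp hq
      rwa [show (x * v) * (x * v + y * u) + -((x * u) * (y * v)) = (x * v) ^ 2 by ring,
        ← pow_mul, show 2 * (t + t) = 4 * t by ring] at this
    have hyu : (y * u) ^ (4 * t) ∈ It t := by
      have hp : ((y * u) * (x * v + y * u)) ^ t ∈ It t := by
        rw [show ((y * u) * (x * v + y * u)) ^ t =
            (y * u) ^ t * (x * v + y * u) ^ t by rw [mul_pow]]
        exact Ideal.mul_mem_left _ _ hg3'
      have hq : (-((x * u) * (y * v))) ^ t ∈ It t := by
        rw [show (-((x * u) * (y * v))) ^ t =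
            (-1) ^ t * ((x * u) ^ t * (y * v) ^ t) by rw [← mul_pow, neg_pow]]
        exact Ideal.mul_mem_left _ _ hab
      have := pow_add_mem_ideal (K := It t) hp hq
      rwa [show (y * u) * (x * v + y * u) + -((x * u) * (y * v)) = (y * u) ^ 2 by ring,
        ← pow_mul, show 2 * (t + t) = 4 * t by ring] at this
    show Ideal.span _ ≤ _
    rw [Ideal.span_le]
    rintro p hp
    simp only [Set.mem_insert_iff, Set.mem_singleton_iff] at hp
    rcases hp with rfl | rfl | rfl
    · rw [show (x * u) ^ (12 * t) = (x * u) ^ (11 * t) * (x * u) ^ t by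
        rw [← pow_add]; ring_nf]
      exact Ideal.mul_mem_left _ _ hg1'
    · rw [show (y * v) ^ (12 * t) = (y * v) ^ (11 * t) * (y * v) ^ t by
        rw [← pow_add]; ring_nf]
      exact Ideal.mul_mem_left _ _ hg2'
    · have h1 : x ^ (12 * t) * v ^ (12 * t) = (x * v) ^ (8 * t) * (x * v) ^ (4 * t) := by
        rw [← pow_add, mul_pow]; ring_nf
      have h2 : y ^ (12 * t) * u ^ (12 * t) = (y * u) ^ (8 * t) * (y * u) ^ (4 * t) := by
        rw [← pow_add, mul_pow]; ring_nf
      rw [h1, h2]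
      exact add_mem (Ideal.mul_mem_left _ _ hxv) (Ideal.mul_mem_left _ _ hyu)
end

section
/- Let R = ℂ[[x,y,u,v]] be the formal power series ring in four variables over ℂ, and let A ⊆ R be the image of the ℂ-algebra substitution homomorphism ℂ[[T₁,T₂,T₃]] → R determined by T₁ ↦ xu, T₂ ↦ yv, T₃ ↦ xv + yu (each of these power series has zero constant term, so the substitution homomorphism is defined). Then the inclusion A ↪ R splits as a map of A-modules: there is an A-linear map π : R → A with π(a) = a for all a ∈ A. -/
/-!
`A` is the ring of invariants of `ℂ[[x,y,u,v]]` under the torus `t • (x,y,u,v) = (tx,ty,t⁻¹u,t⁻¹v)`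
and the involution `x ↔ u, y ↔ v`, and the retraction is the Reynolds operator: keep the monomials
of torus weight zero, then average over the involution. Both steps are linear over invariants.

That every invariant series lies in `A` is a unitriangular linear system: the coefficient of
`(xu)^i (yv)^j (yu)^k` in the image of `f` is `f_{i,j,k}` plus binomial multiples of the
`f_{i-m,j-m,k+2m}` with `m ≥ 1`, and an invariant series is determined by these coefficients.
-/

open MvPowerSeries

/-- The substitution homomorphism `ℂ[[T₁,T₂,T₃]] → ℂ[[x,y,u,v]]` sending
`T₁ ↦ xu`, `T₂ ↦ yv`, `T₃ ↦ xv + yu`, described coefficientwise: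
the coefficient of the result at `e` is the (finitely supported) sum over
`n = (n₁,n₂,n₃)` of `(coeff n f) ·  coeff_e ((xu)^{n₁} (yv)^{n₂} (xv+yu)^{n₃})`. -/
noncomputable def substXYUV (f : MvPowerSeries (Fin 3) ℂ) : MvPowerSeries (Fin 4) ℂ :=
  fun e => ∑ᶠ n : Fin 3 →₀ ℕ,
    MvPowerSeries.coeff n f *
      MvPowerSeries.coeff e
        (((X 0 * X 2 : MvPowerSeries (Fin 4) ℂ) ^ n 0) *
          ((X 1 * X 3 : MvPowerSeries (Fin 4) ℂ) ^ n 1) *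
          ((X 0 * X 3 + X 1 * X 2 : MvPowerSeries (Fin 4) ℂ) ^ n 2))

open Finsupp

theorem exists_unitriangular_solution {α ι R : Type*} [Ring R] (rank : α → ℕ)
    (M : α → Finset ι) (φ : α → ι → α) (c : α → ι → R)
    (hφ : ∀ x, ∀ i ∈ M x, rank (φ x i) < rank x) (s : α → R) :
    ∃ g : α → R, ∀ x, g x + ∑ i ∈ M x, c x i * g (φ x i) = s x := by
  refine ⟨(measure rank).wf.fix fun x g ↦
    s x - ∑ i ∈ (M x).attach, c x i * g (φ x i) (hφ x i i.2), fun x ↦ ?_⟩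
  rw [WellFounded.fix_eq, ← Finset.sum_attach (M x), sub_add_cancel]

section WeightZero

variable {σ R M : Type*} [CommSemiring R] [AddCommMonoid M] [DecidableEq M]
  (w : (σ →₀ ℕ) →+ M)

noncomputable def weightZeroPart : MvPowerSeries σ R →ₗ[R] MvPowerSeries σ R :=
  LinearMap.pi fun d ↦ if w d = 0 then coeff d else 0

theorem coeff_weightZeroPart (d : σ →₀ ℕ) (f : MvPowerSeries σ R) :
    coeff d (weightZeroPart w f) = if w d = 0 then coeff d f else 0 := by
  change (if w d = 0 then coeff d else 0) f = _
  split_ifs <;> rfl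

theorem weightZeroPart_weightZeroPart (f : MvPowerSeries σ R) :
    weightZeroPart w (weightZeroPart w f) = weightZeroPart w f := by
  ext d
  by_cases h : w d = 0 <;> simp [coeff_weightZeroPart, h]

variable {w} in
theorem weightZeroPart_mul_of_left {a : MvPowerSeries σ R} (ha : weightZeroPart w a = a)
    (f : MvPowerSeries σ R) : weightZeroPart w (a * f) = a * weightZeroPart w f := by
  classical
  ext d
  rw [coeff_weightZeroPart, coeff_mul, coeff_mul, Finset.ite_sum_zero]
  refine Finset.sum_congr rfl fun pq hpq ↦ ?_
  rw [← ha, coeff_weightZeroPart, coeff_weightZeroPart,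
    ← Finset.HasAntidiagonal.mem_antidiagonal.1 hpq, map_add]
  by_cases hp : w pq.1 = 0 <;> simp [hp]

noncomputable def weightZeroSubalgebra : Subalgebra R (MvPowerSeries σ R) where
  carrier := {a | weightZeroPart w a = a}
  mul_mem' ha hb := by rw [Set.mem_ofPred_eq, weightZeroPart_mul_of_left ha, hb]
  add_mem' ha hb := by rw [Set.mem_ofPred_eq, map_add, ha, hb]
  algebraMap_mem' r := by
    classical
    ext d
    by_cases h : d = 0 <;>
      simp [coeff_weightZeroPart, MvPowerSeries.algebraMap_apply, coeff_C, h]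

theorem monomial_mem_weightZeroSubalgebra {d : σ →₀ ℕ} (hd : w d = 0) (r : R) :
    monomial d r ∈ weightZeroSubalgebra w := by
  classical
  ext e
  by_cases h : e = d <;> simp [coeff_weightZeroPart, coeff_monomial, h, hd]

end WeightZero

section Symmetries

-- The variables `X 0, X 1, X 2, X 3` are `x, y, u, v`.
def xuyvPerm : Equiv.Perm (Fin 4) where
  toFun := ![2, 3, 0, 1]
  invFun := ![2, 3, 0, 1]
  left_inv := by decide
  right_inv := by decide

theorem xuyvPerm_symm : xuyvPerm.symm = xuyvPerm := rfl

noncomputable def torusWeight : (Fin 4 →₀ ℕ) →+ ℤ := weight ![1, 1, -1, -1]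

theorem torusWeight_apply (e : Fin 4 →₀ ℕ) :
    torusWeight e = (e 0 + e 1 : ℤ) - e 2 - e 3 := by
  simp [torusWeight, weight_apply, sum_fintype, Fin.sum_univ_four]
  ring

theorem torusWeight_equivMapDomain (e : Fin 4 →₀ ℕ) :
    torusWeight (e.equivMapDomain xuyvPerm) = -torusWeight e := by
  simp [torusWeight_apply, equivMapDomain_apply, xuyvPerm]
  ring

variable (R : Type*) [CommSemiring R]

noncomputable def swapXUYV : MvPowerSeries (Fin 4) R ≃ₐ[R] MvPowerSeries (Fin 4) R :=
  renameEquiv R xuyvPerm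

noncomputable def xyuvInvariants : Subalgebra R (MvPowerSeries (Fin 4) R) :=
  weightZeroSubalgebra torusWeight ⊓ AlgHom.equalizer (swapXUYV R : _ →ₐ[R] _) (AlgHom.id R _)

variable {R}

theorem swapXUYV_swapXUYV (p : MvPowerSeries (Fin 4) R) : swapXUYV R (swapXUYV R p) = p := by
  simpa only [swapXUYV, renameEquiv_symm, xuyvPerm_symm] using
    (swapXUYV R).symm_apply_apply p

theorem coeff_swapXUYV (e : Fin 4 →₀ ℕ) (p : MvPowerSeries (Fin 4) R) :
    coeff e (swapXUYV R p) = coeff (e.equivMapDomain xuyvPerm) p := by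
  have he : embDomain xuyvPerm.toEmbedding (e.equivMapDomain xuyvPerm) = e := by
    rw [embDomain_eq_mapDomain, equivMapDomain_eq_mapDomain, ← mapDomain_comp]
    exact (congrArg (mapDomain · e) xuyvPerm.self_comp_symm).trans mapDomain_id
  conv_lhs => rw [← he]
  exact coeff_embDomain_rename _ _ _

theorem swapXUYV_weightZeroPart (p : MvPowerSeries (Fin 4) R) :
    swapXUYV R (weightZeroPart torusWeight p) = weightZeroPart torusWeight (swapXUYV R p) := by
  ext e
  simp only [coeff_swapXUYV, coeff_weightZeroPart, torusWeight_equivMapDomain, neg_eq_zero]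

theorem mem_xyuvInvariants {a : MvPowerSeries (Fin 4) R} :
    a ∈ xyuvInvariants R ↔ weightZeroPart torusWeight a = a ∧ swapXUYV R a = a :=
  Iff.rfl

end Symmetries

section Reynolds

variable (K : Type*) [Field K]

noncomputable def reynolds : MvPowerSeries (Fin 4) K →ₗ[K] MvPowerSeries (Fin 4) K :=
  (2⁻¹ : K) • weightZeroPart torusWeight ∘ₗ (LinearMap.id + (swapXUYV K).toLinearMap)

variable {K}

theorem reynolds_apply (r : MvPowerSeries (Fin 4) K) :
    reynolds K r = (2⁻¹ : K) • weightZeroPart torusWeight (r + swapXUYV K r) :=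
  rfl

theorem reynolds_mem (r : MvPowerSeries (Fin 4) K) : reynolds K r ∈ xyuvInvariants K := by
  refine mem_xyuvInvariants.2 ⟨?_, ?_⟩
  · rw [reynolds_apply, map_smul, weightZeroPart_weightZeroPart]
  · rw [reynolds_apply, map_smul, swapXUYV_weightZeroPart, map_add, swapXUYV_swapXUYV, add_comm]

theorem reynolds_of_mem [NeZero (2 : K)] {a : MvPowerSeries (Fin 4) K}
    (ha : a ∈ xyuvInvariants K) : reynolds K a = a := by
  obtain ⟨hw, hs⟩ := mem_xyuvInvariants.1 ha
  rw [reynolds_apply, hs, ← two_smul K, map_smul, hw, smul_smul, inv_mul_cancel₀ two_ne_zero,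
    one_smul]

theorem reynolds_mul_of_mem {a : MvPowerSeries (Fin 4) K} (ha : a ∈ xyuvInvariants K)
    (r : MvPowerSeries (Fin 4) K) : reynolds K (a * r) = a * reynolds K r := by
  obtain ⟨hw, hs⟩ := mem_xyuvInvariants.1 ha
  rw [reynolds_apply, reynolds_apply, map_mul, hs, ← mul_add, weightZeroPart_mul_of_left hw,
    mul_smul_comm]

end Reynolds

section Monomials

variable (R : Type*) [CommSemiring R]

noncomputable def substMonomial (n : Fin 3 →₀ ℕ) : MvPowerSeries (Fin 4) R :=
  (X 0 * X 2) ^ n 0 * (X 1 * X 3) ^ n 1 * (X 0 * X 3 + X 1 * X 2) ^ n 2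

variable {R}

theorem substMonomial_mem_xyuvInvariants (n : Fin 3 →₀ ℕ) :
    substMonomial R n ∈ xyuvInvariants R := by
  have hX : ∀ i j : Fin 4, torusWeight (single i 1 + single j 1) = 0 →
      (X i * X j : MvPowerSeries (Fin 4) R) ∈ weightZeroSubalgebra torusWeight := fun i j h ↦ by
    rw [X_def, X_def, monomial_mul_monomial, one_mul]
    exact monomial_mem_weightZeroSubalgebra _ h 1
  have hxu : (X 0 * X 2 : MvPowerSeries (Fin 4) R) ∈ xyuvInvariants R :=
    ⟨hX 0 2 (by simp [torusWeight_apply]), by simp [swapXUYV, xuyvPerm, mul_comm]⟩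
  have hyv : (X 1 * X 3 : MvPowerSeries (Fin 4) R) ∈ xyuvInvariants R :=
    ⟨hX 1 3 (by simp [torusWeight_apply]), by simp [swapXUYV, xuyvPerm, mul_comm]⟩
  have hxv_yu : (X 0 * X 3 + X 1 * X 2 : MvPowerSeries (Fin 4) R) ∈ xyuvInvariants R :=
    ⟨add_mem (hX 0 3 (by simp [torusWeight_apply])) (hX 1 2 (by simp [torusWeight_apply])),
      by simp [swapXUYV, xuyvPerm]; ring⟩
  exact mul_mem (mul_mem (pow_mem hxu _) (pow_mem hyv _)) (pow_mem hxv_yu _)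

-- The exponent of `(xu)^{n₀} (yv)^{n₁} (xv)^m (yu)^{n₂-m}`.
noncomputable def termExp (n : Fin 3 →₀ ℕ) (m : ℕ) : Fin 4 →₀ ℕ :=
  equivFunOnFinite.symm ![n 0 + m, n 1 + (n 2 - m), n 0 + (n 2 - m), n 1 + m]

theorem substMonomial_eq_sum (n : Fin 3 →₀ ℕ) :
    substMonomial R n =
      ∑ m ∈ Finset.range (n 2 + 1), (n 2).choose m • monomial (termExp n m) 1 := by
  rw [substMonomial, add_pow, Finset.mul_sum]
  refine Finset.sum_congr rfl fun m _ ↦ ?_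
  have hterm : (X 0 * X 2) ^ n 0 * (X 1 * X 3) ^ n 1 * ((X 0 * X 3) ^ m * (X 1 * X 2) ^ (n 2 - m))
      = (monomial (termExp n m) 1 : MvPowerSeries (Fin 4) R) := by
    simp only [mul_pow, X_pow_eq, monomial_mul_monomial, mul_one]
    refine congrArg (monomial · 1) (Finsupp.ext fun i ↦ ?_)
    fin_cases i <;> simp [termExp]
  rw [nsmul_eq_mul, ← hterm]
  ring

-- The exponent of `(xu)^{n₀} (yv)^{n₁} (yu)^{n₂}`; up to the swap, every exponent of torus
-- weight zero is of this form.
noncomputable def yuExp (n : Fin 3 →₀ ℕ) : Fin 4 →₀ ℕ :=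
  equivFunOnFinite.symm ![n 0, n 1 + n 2, n 0 + n 2, n 1]

noncomputable def descend (n : Fin 3 →₀ ℕ) (m : ℕ) : Fin 3 →₀ ℕ :=
  equivFunOnFinite.symm ![n 0 - m, n 1 - m, n 2 + 2 * m]

theorem descend_zero (n : Fin 3 →₀ ℕ) : descend n 0 = n := by
  ext i
  fin_cases i <;> simp [descend]

theorem termExp_eq_yuExp_iff {n n' : Fin 3 →₀ ℕ} {m : ℕ} :
    (m < n' 2 + 1 ∧ yuExp n = termExp n' m) ↔
      (m < min (n 0) (n 1) + 1 ∧ n' = descend n m) := by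
  simp [Finsupp.ext_iff, Fin.forall_fin_succ, yuExp, termExp, descend]
  omega

theorem coeff_yuExp_substMonomial (n n' : Fin 3 →₀ ℕ) :
    coeff (yuExp n) (substMonomial R n') = ∑ m ∈ Finset.range (min (n 0) (n 1) + 1),
      if n' = descend n m then ((n 2 + 2 * m).choose m : R) else 0 := by
  classical
  rw [substMonomial_eq_sum, map_sum]
  simp only [map_nsmul, coeff_monomial, smul_ite, nsmul_one, smul_zero]
  rw [← Finset.sum_filter, ← Finset.sum_filter]
  refine Finset.sum_congr ?_ fun m hm ↦ ?_
  · ext m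
    simp only [Finset.mem_filter, Finset.mem_range]
    exact termExp_eq_yuExp_iff
  · rw [(Finset.mem_filter.1 hm).2]
    simp [descend]

end Monomials

theorem coeff_substXYUV (f : MvPowerSeries (Fin 3) ℂ) (e : Fin 4 →₀ ℕ) :
    coeff e (substXYUV f) = ∑ᶠ n, coeff n f * coeff e (substMonomial ℂ n) :=
  rfl

theorem substXYUV_mem_xyuvInvariants (f : MvPowerSeries (Fin 3) ℂ) :
    substXYUV f ∈ xyuvInvariants ℂ := by
  have hmono := fun n ↦ mem_xyuvInvariants.1 (substMonomial_mem_xyuvInvariants (R := ℂ) n)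
  refine mem_xyuvInvariants.2 ⟨?_, ?_⟩ <;> ext e
  · rw [coeff_weightZeroPart, coeff_substXYUV]
    split_ifs with he
    · rfl
    · refine (finsum_eq_zero_of_forall_eq_zero fun n ↦ ?_).symm
      rw [← (hmono n).1, coeff_weightZeroPart, if_neg he, mul_zero]
  · rw [coeff_swapXUYV, coeff_substXYUV, coeff_substXYUV]
    refine finsum_congr fun n ↦ ?_
    rw [← coeff_swapXUYV, (hmono n).2]

theorem coeff_yuExp_substXYUV (f : MvPowerSeries (Fin 3) ℂ) (n : Fin 3 →₀ ℕ) :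
    coeff (yuExp n) (substXYUV f) = ∑ m ∈ Finset.range (min (n 0) (n 1) + 1),
      ((n 2 + 2 * m).choose m : ℂ) * coeff (descend n m) f := by
  simp_rw [coeff_substXYUV, coeff_yuExp_substMonomial, Finset.mul_sum, mul_ite, mul_zero]
  rw [finsum_sum_comm]
  · refine Finset.sum_congr rfl fun m _ ↦ ?_
    rw [finsum_eq_single _ (descend n m) fun n' h ↦ if_neg h, if_pos rfl, mul_comm]
  · intro m _
    refine (Set.finite_singleton (descend n m)).subset fun n' hn' ↦ ?_
    by_contra h
    exact hn' (if_neg h)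

theorem eq_of_coeff_yuExp_eq {R : Type*} [CommSemiring R] {a b : MvPowerSeries (Fin 4) R}
    (ha : a ∈ xyuvInvariants R) (hb : b ∈ xyuvInvariants R)
    (h : ∀ n, coeff (yuExp n) a = coeff (yuExp n) b) : a = b := by
  obtain ⟨hwa, hsa⟩ := mem_xyuvInvariants.1 ha
  obtain ⟨hwb, hsb⟩ := mem_xyuvInvariants.1 hb
  have hyu : ∀ e, torusWeight e = 0 → e 3 ≤ e 1 → coeff e a = coeff e b := fun e hw hle ↦ by
    have he : e = yuExp (equivFunOnFinite.symm ![e 0, e 3, e 1 - e 3]) := by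
      rw [torusWeight_apply] at hw
      ext i
      fin_cases i <;> simp [yuExp] <;> omega
    rw [he]
    exact h _
  ext e
  by_cases hw : torusWeight e = 0
  · rcases le_total (e 3) (e 1) with hle | hle
    · exact hyu e hw hle
    · rw [← hsa, ← hsb, coeff_swapXUYV, coeff_swapXUYV]
      exact hyu _ (by rw [torusWeight_equivMapDomain, hw, neg_zero])
        (by simpa [equivMapDomain_apply, xuyvPerm] using hle)
  · rw [← hwa, ← hwb, coeff_weightZeroPart, coeff_weightZeroPart, if_neg hw, if_neg hw]

theorem exists_substXYUV_eq {s : MvPowerSeries (Fin 4) ℂ} (hs : s ∈ xyuvInvariants ℂ) :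
    ∃ f, substXYUV f = s := by
  obtain ⟨g, hg⟩ : ∃ g : MvPowerSeries (Fin 3) ℂ, ∀ n,
      coeff n g + ∑ m ∈ Finset.range (min (n 0) (n 1)),
        ((n 2 + 2 * (m + 1)).choose (m + 1) : ℂ) * coeff (descend n (m + 1)) g =
          coeff (yuExp n) s :=
    exists_unitriangular_solution (fun n : Fin 3 →₀ ℕ ↦ n 0)
      (fun n ↦ Finset.range (min (n 0) (n 1))) (fun n m ↦ descend n (m + 1))
      (fun n m ↦ ((n 2 + 2 * (m + 1)).choose (m + 1) : ℂ))
      (fun n m hm ↦ by simp [descend] at hm ⊢; omega) (fun n ↦ coeff (yuExp n) s)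
  refine ⟨g, eq_of_coeff_yuExp_eq (substXYUV_mem_xyuvInvariants g) hs fun n ↦ ?_⟩
  rw [coeff_yuExp_substXYUV, Finset.sum_range_succ', ← hg n, descend_zero]
  simp only [mul_zero, add_zero, Nat.choose_zero_right, Nat.cast_one, one_mul]
  exact add_comm _ _

theorem mem_range_substXYUV {a : MvPowerSeries (Fin 4) ℂ} :
    a ∈ Set.range substXYUV ↔ a ∈ xyuvInvariants ℂ :=
  ⟨fun ⟨f, hf⟩ ↦ hf ▸ substXYUV_mem_xyuvInvariants f, exists_substXYUV_eq⟩

/-- Let `R = ℂ[[x,y,u,v]]` and let `A` be the image of the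
substitution homomorphism `ℂ[[T₁,T₂,T₃]] → R`, `T₁ ↦ xu`, `T₂ ↦ yv`,
`T₃ ↦ xv + yu` (so `A = ℂ[[xu, yv, xv+yu]]`).  Then the inclusion `A ↪ R`
splits as a map of `A`-modules: there is an `A`-linear retraction `π : R → A`. -/
theorem subalgebra_splits :
    ∃ π : MvPowerSeries (Fin 4) ℂ → MvPowerSeries (Fin 4) ℂ,
      (∀ r, π r ∈ Set.range substXYUV) ∧
      (∀ a ∈ Set.range substXYUV, π a = a) ∧
      (∀ r s : MvPowerSeries (Fin 4) ℂ, π (r + s) = π r + π s) ∧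
      (∀ a ∈ Set.range substXYUV, ∀ r : MvPowerSeries (Fin 4) ℂ, π (a * r) = a * π r) :=
  ⟨reynolds ℂ, fun r ↦ mem_range_substXYUV.2 (reynolds_mem r),
    fun _ ha ↦ reynolds_of_mem (mem_range_substXYUV.1 ha), map_add _,
    fun _ ha r ↦ reynolds_mul_of_mem (mem_range_substXYUV.1 ha) r⟩
end
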